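/- There is a constant κ > 0 such that for every n and every nonnegative function g on the Hamming cube Ω₂ⁿ with P{x : g(x) = 0} ≥ 1/2, one has ‖g‖²_{L²logL} ≤ κ·𝔼[(Mg)²]. -/

import Mathlib

/-- The Hamming cube `Ω₂ⁿ = {-1,1}ⁿ`, encoded as `Fin n → Bool`. -/
abbrev Cube (n : ℕ) : Type := Fin n → Bool

/-- The sign `±1` associated to a Boolean coordinate. -/
def sgn (b : Bool) : ℝ := if b then 1 else -1

/-- Expectation with respect to the uniform probability measure on the Hamming cube. -/
noncomputable def expect {n : ℕ} (f : Cube n → ℝ) : ℝ :=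
  (∑ x : Cube n, f x) / 2 ^ n

/-- The `i`-th discrete derivative `D_i f(x) = (f(x) - f(σ_i x))/2`, where `σ_i`
flips the `i`-th coordinate. -/
noncomputable def Di {n : ℕ} {E : Type*} [AddCommGroup E] [Module ℝ E]
    (f : Cube n → E) (i : Fin n) (x : Cube n) : E :=
  ((2 : ℝ)⁻¹) • (f x - f (Function.update x i (!x i)))

/-- `ψ₂(t) = t²·log(e + t²)`, the Young function of the Orlicz space `L² log L`. -/
noncomputable def psi2 (t : ℝ) : ℝ := t ^ 2 * Real.log (Real.exp 1 + t ^ 2)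

/-- The Orlicz norm `‖g‖_{L² log L} = inf {λ > 0 : 𝔼 ψ₂(g/λ) ≤ 1}`. -/
noncomputable def orliczNorm {n : ℕ} (g : Cube n → ℝ) : ℝ :=
  sInf {lam : ℝ | 0 < lam ∧ expect (fun x => psi2 (g x / lam)) ≤ 1}

/-- `(Mg)²(x) = Σᵢ ((D_i g(x))₊)²`. -/
noncomputable def Msq {n : ℕ} (g : Cube n → ℝ) (x : Cube n) : ℝ :=
  ∑ i, (max (Di g i x) 0) ^ 2

def flp {n : ℕ} (i : Fin n) (x : Cube n) : Cube n := Function.update x i (!x i)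

lemma flp_flp {n : ℕ} (i : Fin n) (x : Cube n) : flp i (flp i x) = x := by
  unfold flp
  simp [Function.update_idem]

lemma flp_cons_zero {n : ℕ} (b : Bool) (y : Cube n) :
    flp 0 (Fin.cons b y) = Fin.cons (!b) y := by
  unfold flp
  simp [Fin.update_cons_zero]

lemma flp_cons_succ {n : ℕ} (i : Fin n) (b : Bool) (y : Cube n) :
    flp i.succ (Fin.cons b y) = Fin.cons b (flp i y) := by
  unfold flp
  simp [← Fin.cons_update]

def flpEquiv {n : ℕ} (i : Fin n) : Cube n ≃ Cube n where
  toFun := flp i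
  invFun := flp i
  left_inv := flp_flp i
  right_inv := flp_flp i

lemma sum_cube_succ {n : ℕ} (F : Cube (n + 1) → ℝ) :
    ∑ x : Cube (n + 1), F x
      = ∑ y : Cube n, F (Fin.cons true y) + ∑ y : Cube n, F (Fin.cons false y) := by
  rw [← Fintype.sum_equiv (Fin.consEquiv (fun _ : Fin (n+1) => Bool))
      (fun p => F (Fin.cons p.1 p.2)) F (fun p => rfl)]
  rw [Fintype.sum_prod_type]
  simp [Fintype.sum_bool]

lemma expect_succ {n : ℕ} (F : Cube (n + 1) → ℝ) :
    expect F = (expect (fun y => F (Fin.cons true y)) + expect (fun y => F (Fin.cons false y))) / 2 := by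
  unfold expect
  rw [sum_cube_succ, pow_succ]
  field_simp

lemma card_cube (n : ℕ) : (Finset.univ : Finset (Cube n)).card = 2 ^ n := by
  simp [Finset.card_univ]

lemma expect_nonneg {n : ℕ} {f : Cube n → ℝ} (h : ∀ x, 0 ≤ f x) : 0 ≤ expect f :=
  div_nonneg (Finset.sum_nonneg fun x _ => h x) (by positivity)

lemma expect_mono {n : ℕ} {f g : Cube n → ℝ} (h : ∀ x, f x ≤ g x) : expect f ≤ expect g :=
  div_le_div_of_nonneg_right (Finset.sum_le_sum fun x _ => h x) (by positivity) |>.trans_eq rfl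

lemma expect_add {n : ℕ} (f g : Cube n → ℝ) :
    expect (fun x => f x + g x) = expect f + expect g := by
  unfold expect; rw [Finset.sum_add_distrib, add_div]

lemma expect_sub {n : ℕ} (f g : Cube n → ℝ) :
    expect (fun x => f x - g x) = expect f - expect g := by
  unfold expect; rw [Finset.sum_sub_distrib, sub_div]

lemma expect_const {n : ℕ} (c : ℝ) : expect (fun _ : Cube n => c) = c := by
  unfold expect
  rw [Finset.sum_const, card_cube]
  simp

lemma expect_const_mul {n : ℕ} (c : ℝ) (f : Cube n → ℝ) :
    expect (fun x => c * f x) = c * expect f := by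
  unfold expect; rw [← Finset.mul_sum, mul_div_assoc]

/-- Cauchy–Schwarz / Jensen: `(𝔼 h)² ≤ 𝔼 h²`. -/
lemma sq_expect_le {n : ℕ} (h : Cube n → ℝ) :
    (expect h) ^ 2 ≤ expect (fun x => h x ^ 2) := by
  unfold expect
  rw [div_pow, div_le_div_iff₀ (by positivity) (by positivity)]
  have := sq_sum_le_card_mul_sum_sq (s := (Finset.univ : Finset (Cube n))) (f := h)
  rw [card_cube] at this
  calc (∑ x : Cube n, h x) ^ 2 * 2 ^ n ≤ ((2:ℝ)^n * ∑ x : Cube n, h x ^ 2) * 2 ^ n := by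
        apply mul_le_mul_of_nonneg_right _ (by positivity)
        exact_mod_cast this
    _ = (∑ x : Cube n, h x ^ 2) * ((2:ℝ) ^ n) ^ 2 := by ring

/-- One-sided convexity gap bound for `φ(u) = u log u`. -/
lemma phiGap {u v : ℝ} (hv : 0 ≤ v) (hvu : v ≤ u) :
    (u * Real.log u + v * Real.log v) / 2 - ((u + v) / 2) * Real.log ((u + v) / 2)
      ≤ (u - v) ^ 2 / (2 * (u + v)) := by
  rcases eq_or_lt_of_le (hv.trans hvu) with hu0 | hu
  · rw [← hu0] at hvu ⊢
    have hv0 : v = 0 := le_antisymm hvu hv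
    simp [← hu0, hv0]
  · set m : ℝ := (u + v) / 2 with hm
    have hm0 : 0 < m := by positivity
    set t : ℝ := (u - v) / (u + v) with ht
    have huv : 0 < u + v := by linarith
    have ht0 : 0 ≤ t := div_nonneg (by linarith) (by linarith)
    have ht1 : t ≤ 1 := by
      rw [ht, div_le_one huv]; linarith
    have hu_eq : u = m * (1 + t) := by
      rw [hm, ht]; field_simp; ring
    have hv_eq : v = m * (1 - t) := by
      rw [hm, ht]; field_simp; ring
    have hlogu : u * Real.log u = m * (1 + t) * (Real.log m + Real.log (1 + t)) := by
      rw [hu_eq, Real.log_mul (ne_of_gt hm0) (by positivity)]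
    have hlogv : v * Real.log v = m * (1 - t) * (Real.log m + Real.log (1 - t)) := by
      rcases eq_or_lt_of_le ht1 with h1 | h1
      · rw [hv_eq, h1]; simp
      · rw [hv_eq, Real.log_mul (ne_of_gt hm0) (by nlinarith)]
    have key1 : (1 + t) * Real.log (1 + t) ≤ t + t ^ 2 := by
      have : Real.log (1 + t) ≤ t := by
        have := Real.log_le_sub_one_of_pos (x := 1 + t) (by linarith)
        linarith
      nlinarith
    have key2 : (1 - t) * Real.log (1 - t) ≤ t ^ 2 - t := by
      rcases eq_or_lt_of_le ht1 with h1 | h1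
      · rw [h1]; norm_num
      · have : Real.log (1 - t) ≤ -t := by
          have := Real.log_le_sub_one_of_pos (x := 1 - t) (by linarith)
          linarith
        nlinarith
    have goal_eq : (u - v) ^ 2 / (2 * (u + v)) = m * t ^ 2 := by
      rw [hm, ht]; field_simp
    rw [goal_eq, hlogu, hlogv]
    have expand : m * (1 + t) * (Real.log m + Real.log (1 + t)) / 2
        + m * (1 - t) * (Real.log m + Real.log (1 - t)) / 2 - m * Real.log m
        = (m / 2) * ((1 + t) * Real.log (1 + t) + (1 - t) * Real.log (1 - t)) := by ring
    calc (m * (1 + t) * (Real.log m + Real.log (1 + t))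
          + m * (1 - t) * (Real.log m + Real.log (1 - t))) / 2 - m * Real.log m
        = (m / 2) * ((1 + t) * Real.log (1 + t) + (1 - t) * Real.log (1 - t)) := by ring
      _ ≤ (m / 2) * (2 * t ^ 2) := by
          apply mul_le_mul_of_nonneg_left _ (by positivity)
          linarith
      _ = m * t ^ 2 := by ring

/-- Two-point log-Sobolev-type inequality, constant 1 on `(a-b)²`. -/
lemma twoPoint (a b : ℝ) :
    (a ^ 2 * Real.log (a ^ 2) + b ^ 2 * Real.log (b ^ 2)) / 2
      - ((a ^ 2 + b ^ 2) / 2) * Real.log ((a ^ 2 + b ^ 2) / 2) ≤ (a - b) ^ 2 := by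
  -- wlog b² ≤ a²
  suffices H : ∀ a b : ℝ, b ^ 2 ≤ a ^ 2 →
      (a ^ 2 * Real.log (a ^ 2) + b ^ 2 * Real.log (b ^ 2)) / 2
      - ((a ^ 2 + b ^ 2) / 2) * Real.log ((a ^ 2 + b ^ 2) / 2) ≤ (a - b) ^ 2 by
    rcases le_total (b ^ 2) (a ^ 2) with h | h
    · exact H a b h
    · have := H b a h
      calc _ = (b ^ 2 * Real.log (b ^ 2) + a ^ 2 * Real.log (a ^ 2)) / 2
          - ((b ^ 2 + a ^ 2) / 2) * Real.log ((b ^ 2 + a ^ 2) / 2) := by ring_nf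
        _ ≤ (b - a) ^ 2 := this
        _ = (a - b) ^ 2 := by ring
  intro a b hba
  have h1 := phiGap (sq_nonneg b) hba
  refine h1.trans ?_
  rcases eq_or_lt_of_le (sq_nonneg a) with ha | ha
  · have hb : b ^ 2 = 0 := le_antisymm (hba.trans ha.symm.le) (sq_nonneg b)
    have ha' : a = 0 := by nlinarith [sq_nonneg a]
    have hb' : b = 0 := by nlinarith [sq_nonneg b]
    simp [ha', hb']
  · have hpos : 0 < 2 * (a ^ 2 + b ^ 2) := by nlinarith [sq_nonneg b]
    rw [div_le_iff₀ hpos]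
    nlinarith [sq_nonneg (a + b), sq_nonneg (a - b), sq_nonneg (a*b - 1), sq_nonneg (a*a - b*b)]

lemma dirichlet_succ {n : ℕ} (f : Cube (n + 1) → ℝ) :
    expect (fun x => ∑ i, (f x - f (flp i x)) ^ 2)
      = (expect (fun y => ∑ i : Fin n, (f (Fin.cons true y) - f (Fin.cons true (flp i y))) ^ 2)
          + expect (fun y => ∑ i : Fin n, (f (Fin.cons false y) - f (Fin.cons false (flp i y))) ^ 2)) / 2
        + expect (fun y => (f (Fin.cons true y) - f (Fin.cons false y)) ^ 2) := by
  rw [expect_succ]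
  have h1 : ∀ (b : Bool) (y : Cube n),
      (∑ i : Fin (n + 1), (f (Fin.cons b y) - f (flp i (Fin.cons b y))) ^ 2)
        = (f (Fin.cons b y) - f (Fin.cons (!b) y)) ^ 2
          + ∑ i : Fin n, (f (Fin.cons b y) - f (Fin.cons b (flp i y))) ^ 2 := by
    intro b y
    rw [Fin.sum_univ_succ, flp_cons_zero]
    congr 1
    exact Finset.sum_congr rfl fun i _ => by rw [flp_cons_succ]
  have e1 : expect (fun y => (fun x => ∑ i, (f x - f (flp i x)) ^ 2) (Fin.cons true y))
      = expect (fun y => (f (Fin.cons true y) - f (Fin.cons false y)) ^ 2)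
        + expect (fun y => ∑ i : Fin n, (f (Fin.cons true y) - f (Fin.cons true (flp i y))) ^ 2) := by
    rw [← expect_add]
    exact congrArg expect (funext fun y => h1 true y)
  have e2 : expect (fun y => (fun x => ∑ i, (f x - f (flp i x)) ^ 2) (Fin.cons false y))
      = expect (fun y => (f (Fin.cons true y) - f (Fin.cons false y)) ^ 2)
        + expect (fun y => ∑ i : Fin n, (f (Fin.cons false y) - f (Fin.cons false (flp i y))) ^ 2) := by
    rw [← expect_add]
    refine congrArg expect (funext fun y => (h1 false y).trans ?_)
    simp only [Bool.not_false]
    ring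
  rw [e1, e2]
  ring

lemma expect_zero_cube (f : Cube 0 → ℝ) : expect f = f default := by
  simp [expect]
  exact congrArg f (Subsingleton.elim _ _)

/-- Poincaré inequality on the cube, constant 1. -/
lemma poincare {n : ℕ} (f : Cube n → ℝ) :
    expect (fun x => f x ^ 2) - (expect f) ^ 2
      ≤ expect (fun x => ∑ i, (f x - f (flp i x)) ^ 2) / 4 := by
  induction n with
  | zero =>
      rw [expect_zero_cube, expect_zero_cube, expect_zero_cube]
      simp
  | succ n ih =>
      have Hf : expect f = (expect (fun y => f (Fin.cons true y))
          + expect (fun y => f (Fin.cons false y))) / 2 := expect_succ f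
      have Hf2 : expect (fun x => f x ^ 2)
          = (expect (fun y => f (Fin.cons true y) ^ 2)
            + expect (fun y => f (Fin.cons false y) ^ 2)) / 2 := expect_succ _
      have HD := dirichlet_succ f
      have iht : expect (fun y => f (Fin.cons true y) ^ 2)
          - (expect (fun y => f (Fin.cons true y))) ^ 2
          ≤ expect (fun y => ∑ i : Fin n,
              (f (Fin.cons true y) - f (Fin.cons true (flp i y))) ^ 2) / 4 :=
        ih (fun y => f (Fin.cons true y))
      have ihf : expect (fun y => f (Fin.cons false y) ^ 2)
          - (expect (fun y => f (Fin.cons false y))) ^ 2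
          ≤ expect (fun y => ∑ i : Fin n,
              (f (Fin.cons false y) - f (Fin.cons false (flp i y))) ^ 2) / 4 :=
        ih (fun y => f (Fin.cons false y))
      have hjen : (expect (fun y => f (Fin.cons true y))
            - expect (fun y => f (Fin.cons false y))) ^ 2
          ≤ expect (fun y => (f (Fin.cons true y) - f (Fin.cons false y)) ^ 2) := by
        rw [← expect_sub]
        exact sq_expect_le _
      rw [Hf, Hf2, HD]
      nlinarith [iht, ihf, hjen]

lemma expect_sq_nonneg {n : ℕ} (f : Cube n → ℝ) : 0 ≤ expect (fun x => f x ^ 2) :=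
  expect_nonneg fun x => sq_nonneg _

/-- L² reverse triangle ingredient:
`(√(𝔼 ft²) - √(𝔼 ff²))² ≤ 𝔼 (ft - ff)²`. -/
lemma sqrt_diff_sq_le {n : ℕ} (ft ff : Cube n → ℝ) :
    (Real.sqrt (expect (fun y => ft y ^ 2)) - Real.sqrt (expect (fun y => ff y ^ 2))) ^ 2
      ≤ expect (fun y => (ft y - ff y) ^ 2) := by
  set mt := expect (fun y => ft y ^ 2) with hmt
  set mf := expect (fun y => ff y ^ 2) with hmf
  have hmt0 : 0 ≤ mt := expect_sq_nonneg ft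
  have hmf0 : 0 ≤ mf := expect_sq_nonneg ff
  have hexp : expect (fun y => (ft y - ff y) ^ 2)
      = mt + mf - 2 * expect (fun y => ft y * ff y) := by
    rw [hmt, hmf, ← expect_const_mul, ← expect_add, ← expect_sub]
    exact congrArg expect (funext fun y => by ring)
  have hcs : expect (fun y => ft y * ff y) ≤ Real.sqrt mt * Real.sqrt mf := by
    have h1 : (expect (fun y => ft y * ff y)) ^ 2 ≤ mt * mf := by
      rw [hmt, hmf]
      unfold expect
      rw [div_pow, div_mul_div_comm, ← pow_two]
      gcongr
      exact Finset.sum_mul_sq_le_sq_mul_sq Finset.univ ft ff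
    calc expect (fun y => ft y * ff y)
        ≤ |expect (fun y => ft y * ff y)| := le_abs_self _
      _ = Real.sqrt ((expect (fun y => ft y * ff y)) ^ 2) := (Real.sqrt_sq_eq_abs _).symm
      _ ≤ Real.sqrt (mt * mf) := Real.sqrt_le_sqrt h1
      _ = Real.sqrt mt * Real.sqrt mf := Real.sqrt_mul hmt0 _
  have hexpand : (Real.sqrt mt - Real.sqrt mf) ^ 2
      = mt + mf - 2 * (Real.sqrt mt * Real.sqrt mf) := by
    have e1 : Real.sqrt mt ^ 2 = mt := Real.sq_sqrt hmt0
    have e2 : Real.sqrt mf ^ 2 = mf := Real.sq_sqrt hmf0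
    nlinarith [e1, e2]
  rw [hexpand, hexp]
  linarith

/-- Log-Sobolev inequality on the cube (non-optimal constant). -/
lemma lsi {n : ℕ} (f : Cube n → ℝ) :
    expect (fun x => f x ^ 2 * Real.log (f x ^ 2))
      - expect (fun x => f x ^ 2) * Real.log (expect (fun x => f x ^ 2))
      ≤ expect (fun x => ∑ i, (f x - f (flp i x)) ^ 2) := by
  induction n with
  | zero =>
      rw [expect_zero_cube, expect_zero_cube, expect_zero_cube]
      simp
  | succ n ih =>
      set ft : Cube n → ℝ := fun y => f (Fin.cons true y) with hft
      set ff : Cube n → ℝ := fun y => f (Fin.cons false y) with hff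
      have Hf2 : expect (fun x => f x ^ 2)
          = (expect (fun y => ft y ^ 2) + expect (fun y => ff y ^ 2)) / 2 := expect_succ _
      have Hent : expect (fun x => f x ^ 2 * Real.log (f x ^ 2))
          = (expect (fun y => ft y ^ 2 * Real.log (ft y ^ 2))
            + expect (fun y => ff y ^ 2 * Real.log (ff y ^ 2))) / 2 := expect_succ _
      have HD := dirichlet_succ f
      set mt := expect (fun y => ft y ^ 2) with hmt
      set mf := expect (fun y => ff y ^ 2) with hmf
      have hmt0 : 0 ≤ mt := expect_sq_nonneg ft
      have hmf0 : 0 ≤ mf := expect_sq_nonneg ff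
      have iht : expect (fun y => ft y ^ 2 * Real.log (ft y ^ 2)) - mt * Real.log mt
          ≤ expect (fun y => ∑ i : Fin n, (ft y - ft (flp i y)) ^ 2) := ih ft
      have ihf : expect (fun y => ff y ^ 2 * Real.log (ff y ^ 2)) - mf * Real.log mf
          ≤ expect (fun y => ∑ i : Fin n, (ff y - ff (flp i y)) ^ 2) := ih ff
      -- two-point entropy bound for the averages
      have htp := twoPoint (Real.sqrt mt) (Real.sqrt mf)
      rw [Real.sq_sqrt hmt0, Real.sq_sqrt hmf0] at htp
      have hcross : (mt * Real.log mt + mf * Real.log mf) / 2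
          - ((mt + mf) / 2) * Real.log ((mt + mf) / 2)
          ≤ expect (fun y => (ft y - ff y) ^ 2) :=
        htp.trans (sqrt_diff_sq_le ft ff)
      rw [Hent, Hf2, HD]
      linarith

lemma posPart_sq_add (a : ℝ) : (max a 0) ^ 2 + (max (-a) 0) ^ 2 = a ^ 2 := by
  rcases le_total a 0 with h | h
  · rw [max_eq_right h, max_eq_left (neg_nonneg.2 h)]; ring
  · rw [max_eq_left h, max_eq_right (neg_nonpos.2 h)]; ring

lemma sum_posPart_sq {n : ℕ} (i : Fin n) (g : Cube n → ℝ) :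
    2 * ∑ x : Cube n, (max (g x - g (flp i x)) 0) ^ 2
      = ∑ x : Cube n, (g x - g (flp i x)) ^ 2 := by
  have hre : ∑ x : Cube n, (max (-(g x - g (flp i x))) 0) ^ 2
      = ∑ x : Cube n, (max (g x - g (flp i x)) 0) ^ 2 := by
    apply Fintype.sum_equiv (flpEquiv i)
    intro x
    show (max (-(g x - g (flp i x))) 0) ^ 2 = (max (g (flp i x) - g (flp i (flp i x))) 0) ^ 2
    rw [flp_flp]
    ring_nf
  calc 2 * ∑ x : Cube n, (max (g x - g (flp i x)) 0) ^ 2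
      = ∑ x : Cube n, (max (g x - g (flp i x)) 0) ^ 2
        + ∑ x : Cube n, (max (-(g x - g (flp i x))) 0) ^ 2 := by rw [hre]; ring
    _ = ∑ x : Cube n, ((max (g x - g (flp i x)) 0) ^ 2 + (max (-(g x - g (flp i x))) 0) ^ 2) := by
        rw [Finset.sum_add_distrib]
    _ = ∑ x : Cube n, (g x - g (flp i x)) ^ 2 := by
        exact Finset.sum_congr rfl fun x _ => posPart_sq_add _

lemma Msq_eq {n : ℕ} (g : Cube n → ℝ) (x : Cube n) :
    Msq g x = 4⁻¹ * ∑ i, (max (g x - g (flp i x)) 0) ^ 2 := by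
  unfold Msq Di
  rw [Finset.mul_sum]
  refine Finset.sum_congr rfl fun i _ => ?_
  have : (2 : ℝ)⁻¹ • (g x - g (Function.update x i (!x i)))
      = 2⁻¹ * (g x - g (flp i x)) := by rw [smul_eq_mul]; rfl
  rw [this]
  have h2 : max (2⁻¹ * (g x - g (flp i x))) 0 = 2⁻¹ * max (g x - g (flp i x)) 0 := by
    rw [mul_max_of_nonneg _ _ (by norm_num : (0:ℝ) ≤ 2⁻¹), mul_zero]
  rw [h2]
  ring

lemma dirichlet_eq_Msq {n : ℕ} (g : Cube n → ℝ) :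
    expect (fun x => ∑ i, (g x - g (flp i x)) ^ 2) = 8 * expect (fun x => Msq g x) := by
  unfold expect
  rw [← mul_div_assoc]
  congr 1
  calc ∑ x : Cube n, ∑ i, (g x - g (flp i x)) ^ 2
      = ∑ i, ∑ x : Cube n, (g x - g (flp i x)) ^ 2 := Finset.sum_comm
    _ = ∑ i, 2 * ∑ x : Cube n, (max (g x - g (flp i x)) 0) ^ 2 := by
        exact Finset.sum_congr rfl fun i _ => (sum_posPart_sq i g).symm
    _ = 2 * ∑ x : Cube n, ∑ i, (max (g x - g (flp i x)) 0) ^ 2 := by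
        rw [← Finset.mul_sum, Finset.sum_comm]
    _ = 8 * ∑ x : Cube n, Msq g x := by
        rw [Finset.mul_sum, Finset.mul_sum]
        refine Finset.sum_congr rfl fun x _ => ?_
        rw [Msq_eq]
        ring

/-- If `g` vanishes on at least half the cube, `(𝔼 g)² ≤ 𝔼(g²)/2`. -/
lemma sq_expect_le_half {n : ℕ} (g : Cube n → ℝ)
    (hhalf : (1 / 2 : ℝ) ≤ expect (fun x => if g x = 0 then 1 else 0)) :
    (expect g) ^ 2 ≤ expect (fun x => g x ^ 2) * (1 / 2) := by
  classical
  set χ : Cube n → ℝ := fun x => if g x = 0 then 0 else 1 with hχ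
  have hgχ : ∀ x, g x = g x * χ x := by
    intro x
    by_cases h : g x = 0 <;> simp [hχ, h]
  have hχsq : ∀ x, χ x ^ 2 = χ x := by
    intro x
    by_cases h : g x = 0 <;> simp [hχ, h]
  have hχc : expect χ ≤ 1 / 2 := by
    have h1 : expect χ + expect (fun x => if g x = 0 then 1 else 0) = 1 := by
      rw [← expect_add]
      have : (fun x => χ x + if g x = 0 then 1 else 0) = fun _ : Cube n => (1 : ℝ) := by
        funext x
        by_cases h : g x = 0 <;> simp [hχ, h]
      rw [this, expect_const]
    linarith
  have hcs : (expect g) ^ 2 ≤ expect (fun x => g x ^ 2) * expect χ := by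
    have h2 : (∑ x : Cube n, g x * χ x) ^ 2
        ≤ (∑ x : Cube n, g x ^ 2) * ∑ x : Cube n, χ x ^ 2 :=
      Finset.sum_mul_sq_le_sq_mul_sq Finset.univ g χ
    have h3 : (∑ x : Cube n, g x) ^ 2 ≤ (∑ x : Cube n, g x ^ 2) * ∑ x : Cube n, χ x := by
      calc (∑ x : Cube n, g x) ^ 2 = (∑ x : Cube n, g x * χ x) ^ 2 := by
            congr 1; exact Finset.sum_congr rfl fun x _ => hgχ x
        _ ≤ (∑ x : Cube n, g x ^ 2) * ∑ x : Cube n, χ x ^ 2 := h2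
        _ = (∑ x : Cube n, g x ^ 2) * ∑ x : Cube n, χ x := by
            congr 1; exact Finset.sum_congr rfl fun x _ => hχsq x
    unfold expect
    rw [div_pow, div_mul_div_comm, ← pow_two]
    gcongr
  refine hcs.trans ?_
  have hgnn : 0 ≤ expect (fun x => g x ^ 2) := expect_sq_nonneg g
  exact mul_le_mul_of_nonneg_left hχc hgnn

/-- Pointwise logarithmic bound. -/
lemma pointwise_log_bound {s m L : ℝ} (hs : 0 ≤ s) (hm : 0 < m) (hmL : m ≤ L) :
    s * Real.log (Real.exp 1 + s / L) ≤ 2 * s + (s * Real.log s - s * Real.log m) + m := by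
  have hL : 0 < L := lt_of_lt_of_le hm hmL
  have hr : 0 ≤ s / L := div_nonneg hs hL.le
  have he2 : (2 : ℝ) ≤ Real.exp 1 := by
    have := Real.add_one_le_exp (1 : ℝ)
    linarith
  -- Step A : log (e + s/L) ≤ 2 + max (log (s/L)) 0
  have hA : Real.log (Real.exp 1 + s / L) ≤ 2 + max (Real.log (s / L)) 0 := by
    have h1 : Real.exp 1 + s / L ≤ 2 * Real.exp 1 * max 1 (s / L) := by
      rcases le_total (s / L) 1 with h | h
      · rw [max_eq_left h]; nlinarith
      · rw [max_eq_right h]; nlinarith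
    have hmaxpos : (0 : ℝ) < max 1 (s / L) := lt_of_lt_of_le one_pos (le_max_left _ _)
    have h2 : Real.log (Real.exp 1 + s / L) ≤ Real.log (2 * Real.exp 1 * max 1 (s / L)) :=
      Real.log_le_log (by positivity) h1
    have h3 : Real.log (2 * Real.exp 1 * max 1 (s / L))
        = Real.log 2 + 1 + Real.log (max 1 (s / L)) := by
      rw [Real.log_mul (by positivity) (ne_of_gt hmaxpos),
        Real.log_mul (by norm_num) (ne_of_gt (Real.exp_pos 1)), Real.log_exp]
    have h4 : Real.log (max 1 (s / L)) = max (Real.log (s / L)) 0 := by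
      rcases le_total (s / L) 1 with h | h
      · rw [max_eq_left h, Real.log_one, max_eq_right (Real.log_nonpos hr h)]
      · rw [max_eq_right h, max_eq_left (Real.log_nonneg h)]
    have h5 : Real.log 2 ≤ 1 := by
      have := Real.log_le_sub_one_of_pos (x := 2) (by norm_num)
      linarith
    rw [h3, h4] at h2
    linarith
  -- Step B : s * max (log (s/L)) 0 ≤ s log s - s log m + m
  have hB : s * max (Real.log (s / L)) 0 ≤ s * Real.log s - s * Real.log m + m := by
    rcases eq_or_lt_of_le hs with h0 | h0
    · rw [← h0]; simp; linarith
    · have hlogdiv : s * Real.log (s / m) = s * Real.log s - s * Real.log m := by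
        rw [Real.log_div (ne_of_gt h0) (ne_of_gt hm)]
        ring
      have hlow : -m ≤ s * Real.log (s / m) := by
        have h6 : Real.log (m / s) ≤ m / s - 1 := Real.log_le_sub_one_of_pos (by positivity)
        have h7 : Real.log (s / m) = -Real.log (m / s) := by
          rw [← Real.log_inv]
          congr 1
          rw [inv_div]
        rw [h7]
        have h8 : s * (m / s - 1) = m - s := by field_simp
        nlinarith
      rcases le_total s L with hsL | hsL
      · have hmax : max (Real.log (s / L)) 0 = 0 := by
          refine max_eq_right (Real.log_nonpos hr ?_)
          rw [div_le_one hL]; exact hsL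
        rw [hmax, mul_zero]
        linarith
      · have hpos : 0 ≤ Real.log (s / L) := by
          refine Real.log_nonneg ?_
          rw [le_div_iff₀ hL]; linarith
        rw [max_eq_left hpos]
        have h9 : Real.log (s / L) ≤ Real.log (s / m) := by
          apply Real.log_le_log (by positivity)
          exact div_le_div_of_nonneg_left hs hm hmL
        have h10 : s * Real.log (s / L) ≤ s * Real.log (s / m) :=
          mul_le_mul_of_nonneg_left h9 hs
        linarith [hlogdiv ▸ h10]
  have hmul : s * Real.log (Real.exp 1 + s / L) ≤ s * (2 + max (Real.log (s / L)) 0) :=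
    mul_le_mul_of_nonneg_left hA hs
  nlinarith [hB, hmul]

lemma orliczNorm_nonneg {n : ℕ} (g : Cube n → ℝ) : 0 ≤ orliczNorm g :=
  Real.sInf_nonneg fun _ hx => hx.1.le

lemma orliczNorm_le {n : ℕ} (g : Cube n → ℝ) {lam : ℝ}
    (h : 0 < lam) (h2 : expect (fun x => psi2 (g x / lam)) ≤ 1) : orliczNorm g ≤ lam :=
  csInf_le ⟨0, fun _ hx => hx.1.le⟩ ⟨h, h2⟩

lemma orliczNorm_zero {n : ℕ} (g : Cube n → ℝ) (hg : ∀ x, g x = 0) : orliczNorm g = 0 := by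
  unfold orliczNorm
  have : {lam : ℝ | 0 < lam ∧ expect (fun x => psi2 (g x / lam)) ≤ 1} = Set.Ioi 0 := by
    ext lam
    simp only [Set.mem_setOf_eq, Set.mem_Ioi, and_iff_left_iff_imp]
    intro _
    have : (fun x : Cube n => psi2 (g x / lam)) = fun _ : Cube n => (0 : ℝ) := by
      funext x
      rw [hg x]
      simp [psi2]
    rw [this, expect_const]
    norm_num
  rw [this, csInf_Ioi]

/-- **(Talagrand; inequality (19) of Cordero-Erausquin–Eskenazis, case `p = 2`.)**
There is a constant `κ > 0` such that for every `n` and every nonnegative function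
`g` on the Hamming cube vanishing on at least half of the cube,
`‖g‖²_{L² log L} ≤ κ·𝔼[(Mg)²]`. -/
theorem orlicz_le_Msq :
    ∃ κ : ℝ, 0 < κ ∧
      ∀ (n : ℕ) (g : Cube n → ℝ), (∀ x, 0 ≤ g x) →
        (1 / 2 : ℝ) ≤ expect (fun x => if g x = 0 then 1 else 0) →
        orliczNorm g ^ 2 ≤ κ * expect (fun x => Msq g x) := by
  classical
  refine ⟨20, by norm_num, ?_⟩
  intro n g hg hhalf
  set T := expect (fun x => Msq g x) with hT
  have hT0 : 0 ≤ T := expect_nonneg fun x => by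
    unfold Msq; positivity
  set m := expect (fun x => g x ^ 2) with hm
  have hm0 : 0 ≤ m := expect_sq_nonneg g
  have hQ : expect (fun x => ∑ i, (g x - g (flp i x)) ^ 2) = 8 * T := dirichlet_eq_Msq g
  have hpoin := poincare g
  have hcs := sq_expect_le_half g hhalf
  have hmT : m ≤ 4 * T := by
    rw [hQ] at hpoin
    rw [← hm] at hcs hpoin
    nlinarith
  rcases eq_or_lt_of_le hm0 with hm0' | hmpos
  · -- g ≡ 0
    have hsum : ∑ x : Cube n, g x ^ 2 = 0 := by
      have : (∑ x : Cube n, g x ^ 2) / 2 ^ n = 0 := hm0'.symm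
      have h2n : (0:ℝ) < 2 ^ n := by positivity
      field_simp at this
      simpa using this
    have hgz : ∀ x, g x = 0 := by
      intro x
      have := (Finset.sum_eq_zero_iff_of_nonneg (fun x _ => sq_nonneg (g x))).1 hsum x
        (Finset.mem_univ x)
      exact pow_eq_zero_iff (n := 2) (by norm_num) |>.1 this
    rw [orliczNorm_zero g hgz]
    nlinarith [hT0]
  · -- main case : m > 0, hence T > 0
    have hTpos : 0 < T := by linarith
    set L : ℝ := 20 * T with hL
    have hLpos : 0 < L := by positivity
    set lam : ℝ := Real.sqrt L with hlam
    have hlampos : 0 < lam := Real.sqrt_pos.2 hLpos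
    have hlamsq : lam ^ 2 = L := Real.sq_sqrt hLpos.le
    have hmL : m ≤ L := by linarith
    have hEnt := lsi g
    rw [hQ, ← hm] at hEnt
    -- bound 𝔼 ψ₂(g/λ)
    have hpt : ∀ x : Cube n, psi2 (g x / lam)
        = L⁻¹ * (g x ^ 2 * Real.log (Real.exp 1 + g x ^ 2 / L)) := by
      intro x
      unfold psi2
      rw [div_pow, hlamsq]
      field_simp
    have hbound : expect (fun x => psi2 (g x / lam)) ≤ 1 := by
      have e1 : expect (fun x => psi2 (g x / lam))
          = L⁻¹ * expect (fun x => g x ^ 2 * Real.log (Real.exp 1 + g x ^ 2 / L)) := by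
        rw [← expect_const_mul]
        exact congrArg expect (funext hpt)
      have e2 : expect (fun x => g x ^ 2 * Real.log (Real.exp 1 + g x ^ 2 / L))
          ≤ expect (fun x => 2 * g x ^ 2 + (g x ^ 2 * Real.log (g x ^ 2)
              - Real.log m * g x ^ 2) + m) := by
        apply expect_mono
        intro x
        exact (pointwise_log_bound (sq_nonneg (g x)) hmpos hmL).trans_eq (by ring)
      have e4 : expect (fun x => 2 * g x ^ 2 + (g x ^ 2 * Real.log (g x ^ 2)
              - Real.log m * g x ^ 2) + m)
          = 2 * expect (fun x => g x ^ 2)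
            + (expect (fun x => g x ^ 2 * Real.log (g x ^ 2))
              - Real.log m * expect (fun x => g x ^ 2)) + expect (fun _ : Cube n => m) := by
        rw [expect_add, expect_add, expect_const_mul, expect_sub, expect_const_mul]
      have hsum_le : expect (fun x => g x ^ 2 * Real.log (Real.exp 1 + g x ^ 2 / L)) ≤ L := by
        refine (e2.trans_eq e4).trans ?_
        rw [← hm, expect_const]
        have hc : Real.log m * m = m * Real.log m := mul_comm _ _
        nlinarith [hEnt, hmT]
      rw [e1]
      calc L⁻¹ * expect (fun x => g x ^ 2 * Real.log (Real.exp 1 + g x ^ 2 / L))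
          ≤ L⁻¹ * L := mul_le_mul_of_nonneg_left hsum_le (inv_nonneg.2 hLpos.le)
        _ = 1 := inv_mul_cancel₀ hLpos.ne'
    have hmem : orliczNorm g ≤ lam := orliczNorm_le g hlampos hbound
    calc orliczNorm g ^ 2 ≤ lam ^ 2 := by
          exact pow_le_pow_left₀ (orliczNorm_nonneg g) hmem 2
      _ = 20 * T := by rw [hlamsq]
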